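/- arXiv:2303.17032 — 5 statements merged into one kernel-verified Lean document; each statement's English description precedes it below -/
import Mathlib

section
/- Let Λ, A, H̃ ∈ ℝ^{N×N} with Λ, H̃ symmetric. Suppose Λ is positive definite on the subspace D⊥ = {x ∈ ℝᴺ : ⟨x, 1⟩ = 0}, Λ·1 = 0, and H̃ + A Λ⁺ Aᵀ is negative definite (where Λ⁺ is the Moore–Penrose pseudoinverse). Then the block matrix Ξ = [[-Λ, Aᵀ],[A, H̃]] is negative definite on the subspace {(ξ, ε) ∈ ℝ^{2N} : ⟨ξ, 1⟩ = 0}. -/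
open Matrix

private lemma dotT {N : ℕ} (M : Matrix (Fin N) (Fin N) ℝ) (a b : Fin N → ℝ) :
    a ⬝ᵥ (M *ᵥ b) = (Mᵀ *ᵥ a) ⬝ᵥ b := by
  rw [Matrix.dotProduct_mulVec, Matrix.mulVec_transpose]

private lemma dmul {N : ℕ} (M : Matrix (Fin N) (Fin N) ℝ) (a b : Fin N → ℝ) :
    (M *ᵥ a) ⬝ᵥ b = a ⬝ᵥ (Mᵀ *ᵥ b) := by
  rw [dotT, transpose_transpose]

/-- Criterion I of the Schur-complement lemma: if `Λ` is positive definite on the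
subspace orthogonal to `1`, `Λ·1 = 0`, and `H̃ + AΛ⁺Aᵀ` is negative definite,
then `Ξ = [[-Λ, Aᵀ],[A, H̃]]` is negative definite on `{(ξ,ε) : ⟨ξ,1⟩ = 0}`. -/
theorem stmt2 {N : ℕ} (Λ A Ht Λp : Matrix (Fin N) (Fin N) ℝ)
    (hΛsymm : Λ.IsSymm) (hHsymm : Ht.IsSymm)
    (hΛpos : ∀ x : Fin N → ℝ, (∑ j, x j) = 0 → x ≠ 0 → 0 < x ⬝ᵥ (Λ *ᵥ x))
    (hΛ1 : Λ *ᵥ (fun _ => (1 : ℝ)) = 0)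
    -- `Λp` is the Moore–Penrose pseudoinverse of `Λ`:
    (hp1 : Λ * Λp * Λ = Λ) (hp2 : Λp * Λ * Λp = Λp)
    (hp3 : (Λ * Λp)ᵀ = Λ * Λp) (hp4 : (Λp * Λ)ᵀ = Λp * Λ)
    (hneg : ∀ y : Fin N → ℝ, y ≠ 0 → y ⬝ᵥ ((Ht + A * Λp * Aᵀ) *ᵥ y) < 0) :
    ∀ x : Fin N ⊕ Fin N → ℝ, (∑ j, x (Sum.inl j)) = 0 → x ≠ 0 →
      x ⬝ᵥ ((fromBlocks (-Λ) Aᵀ A Ht) *ᵥ x) < 0 := by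
  have hΛT : Λᵀ = Λ := hΛsymm
  -- `Λ * Λpᵀ = Λp * Λ`
  have h1 : Λ * Λpᵀ = Λp * Λ := by
    calc Λ * Λpᵀ = (Λp * Λᵀ)ᵀ := by rw [transpose_mul, transpose_transpose]
    _ = (Λp * Λ)ᵀ := by rw [hΛT]
    _ = Λp * Λ := hp4
  -- `Λpᵀ * Λ = Λ * Λp`
  have h2 : Λpᵀ * Λ = Λ * Λp := by
    calc Λpᵀ * Λ = (Λᵀ * Λp)ᵀ := by rw [transpose_mul, transpose_transpose]
    _ = (Λ * Λp)ᵀ := by rw [hΛT]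
    _ = Λ * Λp := hp3
  have hMYM : Λ * Λpᵀ * Λ = Λ := by
    have h : (Λ * Λpᵀ * Λ)ᵀ = Λ := by
      rw [transpose_mul, transpose_mul, transpose_transpose, hΛT, ← mul_assoc, hp1]
    calc Λ * Λpᵀ * Λ = ((Λ * Λpᵀ * Λ)ᵀ)ᵀ := (transpose_transpose _).symm
    _ = Λᵀ := by rw [h]
    _ = Λ := hΛT
  -- `Λ * Λp` commutes: it equals `Λp * Λ`
  have hQ : Λ * Λp = Λp * Λ := by
    have e1 : Λ * Λp = (Λp * Λ) * (Λ * Λp) := by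
      conv_lhs => rw [← hMYM]
      rw [h1, mul_assoc]
    have e2 : (Λ * Λp) * (Λ * Λpᵀ) = Λp * Λ := by
      rw [← mul_assoc, hp1, h1]
    calc Λ * Λp = (Λp * Λ) * (Λ * Λp) := e1
    _ = (Λ * Λpᵀ)ᵀ * (Λ * Λp)ᵀ := by rw [hp3, h1, hp4]
    _ = ((Λ * Λp) * (Λ * Λpᵀ))ᵀ := (transpose_mul _ _).symm
    _ = (Λp * Λ)ᵀ := by rw [e2]
    _ = Λp * Λ := hp4
  -- symmetry of the pseudoinverse
  have hs : Λpᵀ = Λp := by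
    have hYMY : Λpᵀ * Λ * Λpᵀ = Λpᵀ := by
      have h : (Λpᵀ * Λ * Λpᵀ)ᵀ = Λp := by
        rw [transpose_mul, transpose_mul, transpose_transpose, hΛT, ← mul_assoc, hp2]
      calc Λpᵀ * Λ * Λpᵀ = ((Λpᵀ * Λ * Λpᵀ)ᵀ)ᵀ := (transpose_transpose _).symm
      _ = Λpᵀ := by rw [h]
    calc Λpᵀ = Λpᵀ * Λ * Λpᵀ := hYMY.symm
    _ = (Λ * Λp) * Λpᵀ := by rw [h2]
    _ = (Λp * Λ) * Λpᵀ := by rw [hQ]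
    _ = Λp * (Λ * Λpᵀ) := mul_assoc _ _ _
    _ = Λp * (Λp * Λ) := by rw [h1]
    _ = Λp * (Λ * Λp) := by rw [← hQ]
    _ = Λp := by rw [← mul_assoc, hp2]
  -- `Λp` kills the all-ones vector
  have hΛp1 : Λp *ᵥ (fun _ => (1:ℝ)) = 0 := by
    have h : Λp = Λp * Λp * Λ := by
      rw [mul_assoc, ← hQ, ← mul_assoc, hp2]
    rw [h, ← Matrix.mulVec_mulVec, hΛ1, Matrix.mulVec_zero]
  have hQ1 : (Λp * Λ) *ᵥ (fun _ => (1:ℝ)) = 0 := by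
    rw [← Matrix.mulVec_mulVec, hΛ1, Matrix.mulVec_zero]
  intro x hsum hx
  set ξ : Fin N → ℝ := fun i => x (Sum.inl i) with hξ
  set ε : Fin N → ℝ := fun i => x (Sum.inr i) with hε
  have hxel : x = Sum.elim ξ ε := by funext i; cases i <;> rfl
  -- sums vs dot products with the ones vector
  have dot_one : ∀ a : Fin N → ℝ, a ⬝ᵥ (fun _ => (1:ℝ)) = ∑ j, a j := by
    intro a; simp [dotProduct]
  obtain ⟨w, hw⟩ : ∃ w : Fin N → ℝ, w = Aᵀ *ᵥ ε := ⟨_, rfl⟩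
  obtain ⟨u, hu⟩ : ∃ u : Fin N → ℝ, u = ξ - Λp *ᵥ w := ⟨_, rfl⟩
  -- projection fixes ξ
  have hQξ : (Λp * Λ) *ᵥ ξ = ξ := by
    set v : Fin N → ℝ := ξ - (Λp * Λ) *ᵥ ξ with hv
    have hvsum : ∑ j, v j = 0 := by
      rw [← dot_one]
      have h : ((Λp * Λ) *ᵥ ξ) ⬝ᵥ (fun _ => (1:ℝ)) = 0 := by
        rw [dmul, hp4, hQ1, dotProduct_zero]
      rw [hv, sub_dotProduct, h, dot_one, hsum, sub_zero]
    have hΛv : Λ *ᵥ v = 0 := by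
      rw [hv, Matrix.mulVec_sub, Matrix.mulVec_mulVec, ← mul_assoc, hp1, sub_self]
    have hv0 : v = 0 := by
      by_contra hne
      have h := hΛpos v hvsum hne
      rw [hΛv, dotProduct_zero] at h
      exact lt_irrefl _ h
    have h := sub_eq_zero.mp hv0
    exact h.symm
  -- the key algebraic identity
  have key : x ⬝ᵥ ((fromBlocks (-Λ) Aᵀ A Ht) *ᵥ x)
      = -(u ⬝ᵥ (Λ *ᵥ u)) + ε ⬝ᵥ ((Ht + A * Λp * Aᵀ) *ᵥ ε) := by
    rw [hxel, Matrix.fromBlocks_mulVec, sumElim_dotProduct_sumElim]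
    simp only [Sum.elim_comp_inl, Sum.elim_comp_inr]
    have e1 : ξ ⬝ᵥ ((Λ * Λp) *ᵥ w) = ξ ⬝ᵥ w := by
      rw [dotT, hp3, hQ, hQξ]
    have e2 : (Λp *ᵥ w) ⬝ᵥ (Λ *ᵥ ξ) = ξ ⬝ᵥ w := by
      rw [dmul, hs, Matrix.mulVec_mulVec, hQξ, dotProduct_comm]
    have e3 : (Λp *ᵥ w) ⬝ᵥ ((Λ * Λp) *ᵥ w) = w ⬝ᵥ (Λp *ᵥ w) := by
      rw [dmul, hs, Matrix.mulVec_mulVec, ← mul_assoc, hp2]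
    have e4 : ε ⬝ᵥ (A *ᵥ ξ) = ξ ⬝ᵥ w := by
      rw [dotT, ← hw, dotProduct_comm]
    have e5 : ε ⬝ᵥ ((A * Λp * Aᵀ) *ᵥ ε) = w ⬝ᵥ (Λp *ᵥ w) := by
      rw [← Matrix.mulVec_mulVec, ← hw, ← Matrix.mulVec_mulVec, dotT, ← hw]
    have expand : u ⬝ᵥ (Λ *ᵥ u) = ξ ⬝ᵥ (Λ *ᵥ ξ) - 2 * (ξ ⬝ᵥ w) + w ⬝ᵥ (Λp *ᵥ w) := by
      rw [hu, Matrix.mulVec_sub, Matrix.mulVec_mulVec, sub_dotProduct,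
        dotProduct_sub, dotProduct_sub, e1, e2, e3]
      ring
    rw [dotProduct_add, dotProduct_add, Matrix.neg_mulVec, dotProduct_neg, ← hw, e4, Matrix.add_mulVec,
      dotProduct_add, e5, expand]
    ring
  rw [key]
  -- the first term is nonpositive
  have husum : ∑ j, u j = 0 := by
    rw [← dot_one, hu, sub_dotProduct]
    have h : (Λp *ᵥ w) ⬝ᵥ (fun _ => (1:ℝ)) = 0 := by
      rw [dmul, hs, hΛp1, dotProduct_zero]
    rw [h, dot_one, hsum, sub_zero]
  have hu_nonneg : 0 ≤ u ⬝ᵥ (Λ *ᵥ u) := by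
    rcases eq_or_ne u 0 with h | h
    · rw [h]; simp
    · exact le_of_lt (hΛpos u husum h)
  rcases eq_or_ne ε 0 with hε0 | hε0
  · -- then ξ ≠ 0 and everything reduces to the Λ term
    have hw0 : w = 0 := by rw [hw, hε0, Matrix.mulVec_zero]
    have huξ : u = ξ := by rw [hu, hw0, Matrix.mulVec_zero, sub_zero]
    have hξ0 : ξ ≠ 0 := by
      intro hz
      apply hx
      funext i
      cases i with
      | inl i => exact congrFun hz i
      | inr i => exact congrFun hε0 i
    have h := hΛpos ξ hsum hξ0
    rw [hε0, huξ]
    simp only [dotProduct_zero, zero_dotProduct, add_zero]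
    linarith
  · have h := hneg ε hε0
    linarith
end

section
/- Let Λ, A, H̃ ∈ ℝ^{N×N} with Λ, H̃ symmetric, H̃ negative definite, and Λ + Aᵀ H̃⁻¹ A positive definite on D⊥ = {x : ⟨x, 1⟩ = 0}, with Λ·1 = 0 and A·1 = 0. Then the block matrix Ξ = [[-Λ, Aᵀ],[A, H̃]] is negative definite on {(ξ, ε) ∈ ℝ^{2N} : ⟨ξ, 1⟩ = 0}. -/
open Matrix

/-- Criterion II of the Schur-complement lemma: if `H̃` is negative definite and
`Λ + AᵀH̃⁻¹A` is positive definite on the subspace orthogonal to `1` (with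
`Λ·1 = 0` and `A·1 = 0`), then `Ξ = [[-Λ, Aᵀ],[A, H̃]]` is negative definite on
`{(ξ,ε) : ⟨ξ,1⟩ = 0}`. -/
theorem stmt3 {N : ℕ} (Λ A Ht : Matrix (Fin N) (Fin N) ℝ)
    (hΛsymm : Λ.IsSymm) (hHsymm : Ht.IsSymm)
    (hHneg : ∀ y : Fin N → ℝ, y ≠ 0 → y ⬝ᵥ (Ht *ᵥ y) < 0)
    (hpos : ∀ x : Fin N → ℝ, (∑ j, x j) = 0 → x ≠ 0 →
      0 < x ⬝ᵥ ((Λ + Aᵀ * Ht⁻¹ * A) *ᵥ x))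
    (hΛ1 : Λ *ᵥ (fun _ => (1 : ℝ)) = 0)
    (hA1 : A *ᵥ (fun _ => (1 : ℝ)) = 0) :
    ∀ x : Fin N ⊕ Fin N → ℝ, (∑ j, x (Sum.inl j)) = 0 → x ≠ 0 →
      x ⬝ᵥ ((fromBlocks (-Λ) Aᵀ A Ht) *ᵥ x) < 0 := by
  have hdet : Ht.det ≠ 0 := by
    intro h
    obtain ⟨v, hv, hv0⟩ := (Matrix.exists_mulVec_eq_zero_iff).2 h
    have := hHneg v hv
    rw [hv0] at this
    simp at this
  have hHmul : Ht * Ht⁻¹ = 1 := Matrix.mul_nonsing_inv Ht (isUnit_iff_ne_zero.mpr hdet)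
  intro x hsum hx
  set ξ : Fin N → ℝ := fun i => x (Sum.inl i) with hξdef
  set ε : Fin N → ℝ := fun i => x (Sum.inr i) with hεdef
  have hxe : x = Sum.elim ξ ε := by funext i; cases i <;> rfl
  set w := A *ᵥ ξ with hw
  set z := ε + Ht⁻¹ *ᵥ w with hz
  have hHz : Ht *ᵥ z = Ht *ᵥ ε + w := by
    rw [hz, Matrix.mulVec_add, Matrix.mulVec_mulVec, hHmul, Matrix.one_mulVec]
  have hsymH : ∀ u v : Fin N → ℝ, u ⬝ᵥ (Ht *ᵥ v) = (Ht *ᵥ u) ⬝ᵥ v := by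
    intro u v
    rw [Matrix.dotProduct_mulVec, ← Matrix.mulVec_transpose, hHsymm.eq]
  have hAT : ∀ (u v : Fin N → ℝ), u ⬝ᵥ (Aᵀ *ᵥ v) = (A *ᵥ u) ⬝ᵥ v := by
    intro u v
    rw [Matrix.dotProduct_mulVec, Matrix.vecMul_transpose]
  have key : x ⬝ᵥ ((fromBlocks (-Λ) Aᵀ A Ht) *ᵥ x)
      = -(ξ ⬝ᵥ ((Λ + Aᵀ * Ht⁻¹ * A) *ᵥ ξ)) + z ⬝ᵥ (Ht *ᵥ z) := by
    rw [hxe, Matrix.fromBlocks_mulVec, sumElim_dotProduct_sumElim, hHz]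
    have h1 : ξ ⬝ᵥ (Aᵀ *ᵥ ε) = w ⬝ᵥ ε := hAT ξ ε
    have h2 : ξ ⬝ᵥ ((Aᵀ * Ht⁻¹ * A) *ᵥ ξ) = w ⬝ᵥ (Ht⁻¹ *ᵥ w) := by
      rw [Matrix.mul_assoc, ← Matrix.mulVec_mulVec, hAT, ← Matrix.mulVec_mulVec]
    have h3 : (Ht⁻¹ *ᵥ w) ⬝ᵥ (Ht *ᵥ ε) = w ⬝ᵥ ε := by
      rw [hsymH, Matrix.mulVec_mulVec, hHmul, Matrix.one_mulVec]
    have h4 : (Ht⁻¹ *ᵥ w) ⬝ᵥ w = w ⬝ᵥ (Ht⁻¹ *ᵥ w) := dotProduct_comm _ _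
    simp only [hz, Matrix.add_mulVec, Matrix.neg_mulVec, dotProduct_add,
      add_dotProduct, dotProduct_neg, neg_dotProduct,
      Sum.elim_comp_inl, Sum.elim_comp_inr]
    linarith [h1, h2, h3, h4]
  rw [key]
  have hzle : z ⬝ᵥ (Ht *ᵥ z) ≤ 0 := by
    by_cases hz0 : z = 0
    · simp [hz0]
    · exact le_of_lt (hHneg z hz0)
  by_cases hξ0 : ξ = 0
  · have hε0 : ε ≠ 0 := by
      intro h
      apply hx
      rw [hxe, hξ0, h]
      funext i; cases i <;> rfl
    have hw0 : w = 0 := by rw [hw, hξ0, Matrix.mulVec_zero]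
    have hzε : z = ε := by rw [hz, hw0, Matrix.mulVec_zero, add_zero]
    rw [hξ0, hzε]
    simpa using hHneg ε hε0
  · have hp := hpos ξ hsum hξ0
    linarith
end

section
/- Let B ∈ ℝ^{N×N} be symmetric with B_{j,ℓ} ≥ 0 for j ≠ ℓ, and let δ°_1,...,δ°_N ∈ ℝ and E°_1,...,E°_N > 0. Define Λ by Λ_{j,ℓ} = -E°_j E°_ℓ B_{j,ℓ} cos(δ°_ℓ - δ°_j) for j ≠ ℓ and Λ_{j,j} = Σ_{k≠j} E°_j E°_k B_{j,k} cos(δ°_k - δ°_j). If cos(δ°_j - δ°_ℓ) > 0 for every pair (j,ℓ) with B_{j,ℓ} > 0, then Λ is positive semidefinite, and xᵀΛx = 0 for x orthogonal to the all-ones vector implies Λx = 0 on each connected component; in particular if the graph with edges {(j,ℓ) : B_{j,ℓ} > 0} is connected, Λ is positive definite on {x : ⟨x,1⟩ = 0}. -/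
open Matrix

/-- Angle stability: if `cos(δ°ⱼ - δ°ₗ) > 0` on every edge (`B_{jℓ} > 0`), the
Laplacian-type matrix `Λ` of the lossless angle subsystem is positive
semidefinite, vanishing quadratic form implies `Λx = 0`, and if the graph of
edges `{(j,ℓ) : B_{jℓ} > 0}` is connected, `Λ` is positive definite on
`{x : ⟨x,1⟩ = 0}`. -/
theorem stmt4 {N : ℕ} (B : Matrix (Fin N) (Fin N) ℝ) (δ E : Fin N → ℝ)
    (hBsymm : B.IsSymm)
    (hBpos : ∀ j ℓ, j ≠ ℓ → 0 ≤ B j ℓ)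
    (hE : ∀ j, 0 < E j)
    (Λ : Matrix (Fin N) (Fin N) ℝ)
    (hΛoff : ∀ j ℓ, j ≠ ℓ → Λ j ℓ = -(E j * E ℓ * B j ℓ * Real.cos (δ ℓ - δ j)))
    (hΛdiag : ∀ j, Λ j j = ∑ k ∈ Finset.univ.erase j,
      E j * E k * B j k * Real.cos (δ k - δ j))
    (hcos : ∀ j ℓ, j ≠ ℓ → 0 < B j ℓ → 0 < Real.cos (δ j - δ ℓ)) :
    (∀ x : Fin N → ℝ, 0 ≤ x ⬝ᵥ (Λ *ᵥ x)) ∧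
    (∀ x : Fin N → ℝ, (∑ j, x j) = 0 → x ⬝ᵥ (Λ *ᵥ x) = 0 → Λ *ᵥ x = 0) ∧
    ((∀ j ℓ : Fin N, Relation.ReflTransGen (fun a b => a ≠ b ∧ 0 < B a b) j ℓ) →
      ∀ x : Fin N → ℝ, (∑ j, x j) = 0 → x ≠ 0 → 0 < x ⬝ᵥ (Λ *ᵥ x)) := by
  set w : Fin N → Fin N → ℝ := fun j ℓ => E j * E ℓ * B j ℓ * Real.cos (δ ℓ - δ j) with hw
  have hcos' : ∀ j ℓ : Fin N, Real.cos (δ ℓ - δ j) = Real.cos (δ j - δ ℓ) := by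
    intro j ℓ; rw [← Real.cos_neg, neg_sub]
  have hwsymm : ∀ j ℓ, w j ℓ = w ℓ j := by
    intro j ℓ
    simp only [hw]
    rw [hcos' j ℓ, ← hBsymm.apply j ℓ]
    ring
  have hwnn : ∀ j ℓ, j ≠ ℓ → 0 ≤ w j ℓ := by
    intro j ℓ hne
    rcases (hBpos j ℓ hne).lt_or_eq with h | h
    · have hc : 0 < Real.cos (δ ℓ - δ j) := by rw [hcos']; exact hcos j ℓ hne h
      have := mul_pos (mul_pos (mul_pos (hE j) (hE ℓ)) h) hc
      exact this.le
    · simp only [hw, ← h, mul_zero, zero_mul, le_refl]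
  have hwpos : ∀ j ℓ, j ≠ ℓ → 0 < B j ℓ → 0 < w j ℓ := by
    intro j ℓ hne h
    have hc : 0 < Real.cos (δ ℓ - δ j) := by rw [hcos']; exact hcos j ℓ hne h
    exact mul_pos (mul_pos (mul_pos (hE j) (hE ℓ)) h) hc
  -- Λ *ᵥ x rewritten
  have hmul : ∀ (x : Fin N → ℝ) j, (Λ *ᵥ x) j
      = ∑ ℓ ∈ Finset.univ.erase j, w j ℓ * (x j - x ℓ) := by
    intro x j
    rw [mulVec, dotProduct, ← Finset.add_sum_erase _ _ (Finset.mem_univ j), hΛdiag,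
      Finset.sum_mul, ← Finset.sum_add_distrib]
    refine Finset.sum_congr rfl fun ℓ hℓ => ?_
    have hne : j ≠ ℓ := (Finset.ne_of_mem_erase hℓ).symm
    rw [hΛoff j ℓ hne]
    simp only [hw]
    ring
  have hQ : ∀ x : Fin N → ℝ, 2 * (x ⬝ᵥ (Λ *ᵥ x)) = ∑ j, ∑ ℓ, w j ℓ * (x j - x ℓ) ^ 2 := by
    intro x
    have key : x ⬝ᵥ (Λ *ᵥ x) = ∑ j, ∑ ℓ, x j * (w j ℓ * (x j - x ℓ)) := by
      rw [dotProduct]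
      refine Finset.sum_congr rfl fun j _ => ?_
      rw [hmul, Finset.mul_sum]
      exact Finset.sum_erase _ (by simp)
    have hswap : ∑ j, ∑ ℓ, x j * (w j ℓ * (x j - x ℓ))
        = ∑ j, ∑ ℓ, x ℓ * (w j ℓ * (x ℓ - x j)) := by
      rw [Finset.sum_comm]
      refine Finset.sum_congr rfl fun j _ => Finset.sum_congr rfl fun ℓ _ => ?_
      rw [hwsymm ℓ j]
    rw [key, two_mul]
    nth_rewrite 2 [hswap]
    rw [← Finset.sum_add_distrib]
    refine Finset.sum_congr rfl fun j _ => ?_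
    rw [← Finset.sum_add_distrib]
    refine Finset.sum_congr rfl fun ℓ _ => ?_
    ring
  have htermnn : ∀ (x : Fin N → ℝ) j ℓ, 0 ≤ w j ℓ * (x j - x ℓ) ^ 2 := by
    intro x j ℓ
    rcases eq_or_ne j ℓ with rfl | hne
    · simp
    · exact mul_nonneg (hwnn j ℓ hne) (sq_nonneg _)
  have part1 : ∀ x : Fin N → ℝ, 0 ≤ x ⬝ᵥ (Λ *ᵥ x) := by
    intro x
    have h2 : 0 ≤ ∑ j, ∑ ℓ, w j ℓ * (x j - x ℓ) ^ 2 :=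
      Finset.sum_nonneg fun j _ => Finset.sum_nonneg fun ℓ _ => htermnn x j ℓ
    nlinarith [hQ x]
  -- from vanishing quadratic form, every term vanishes
  have hterm0 : ∀ x : Fin N → ℝ, x ⬝ᵥ (Λ *ᵥ x) = 0 →
      ∀ j ℓ, w j ℓ * (x j - x ℓ) ^ 2 = 0 := by
    intro x hx j ℓ
    have hsum : ∑ j, ∑ ℓ, w j ℓ * (x j - x ℓ) ^ 2 = 0 := by
      rw [← hQ x, hx, mul_zero]
    have hinner : ∀ a ∈ Finset.univ, (∑ ℓ, w a ℓ * (x a - x ℓ) ^ 2) = 0 :=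
      (Finset.sum_eq_zero_iff_of_nonneg fun a _ =>
        Finset.sum_nonneg fun b _ => htermnn x a b).mp hsum
    exact (Finset.sum_eq_zero_iff_of_nonneg fun b _ => htermnn x j b).mp
      (hinner j (Finset.mem_univ j)) ℓ (Finset.mem_univ ℓ)
  have part2 : ∀ x : Fin N → ℝ, x ⬝ᵥ (Λ *ᵥ x) = 0 → Λ *ᵥ x = 0 := by
    intro x hx
    funext j
    rw [hmul, Pi.zero_apply]
    refine Finset.sum_eq_zero fun ℓ _ => ?_
    have := hterm0 x hx j ℓ
    rcases mul_eq_zero.mp this with h | h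
    · rw [h, zero_mul]
    · rw [pow_eq_zero_iff (by norm_num) |>.mp h, mul_zero]
  refine ⟨part1, fun x _ hx => part2 x hx, ?_⟩
  intro hconn x hsum hx0
  rcases (part1 x).lt_or_eq with h | h
  · exact h
  exfalso
  have hx : x ⬝ᵥ (Λ *ᵥ x) = 0 := h.symm
  have hedge : ∀ a b : Fin N, (a ≠ b ∧ 0 < B a b) → x a = x b := by
    intro a b ⟨hne, hb⟩
    have := hterm0 x hx a b
    have hwp := hwpos a b hne hb
    have : (x a - x b) ^ 2 = 0 := by
      rcases mul_eq_zero.mp this with h' | h'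
      · exact absurd h' hwp.ne'
      · exact h'
    have := pow_eq_zero_iff (n := 2) (by norm_num) |>.mp this
    linarith
  have hall : ∀ a b : Fin N, x a = x b := by
    intro a b
    induction hconn a b with
    | refl => rfl
    | tail _ hstep ih => exact ih.trans (hedge _ _ hstep)
  rcases Nat.eq_zero_or_pos N with rfl | hN
  · exact hx0 (funext fun i => i.elim0)
  · have j0 : Fin N := ⟨0, hN⟩
    have hconst : ∑ j, x j = N * x j0 := by
      rw [Finset.sum_congr rfl fun j _ => hall j j0]
      simp [mul_comm]
    have hx0' : x j0 = 0 := by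
      rw [hconst] at hsum
      have hN' : (N : ℝ) ≠ 0 := Nat.cast_ne_zero.mpr hN.ne'
      exact (mul_eq_zero.mp hsum).resolve_left hN'
    exact hx0 (funext fun i => (hall i j0).trans hx0')
end

section
/- Let H̃ ∈ ℝ^{N×N} be symmetric with entries H̃_{j,ℓ} = B_{j,ℓ} cos(δ°_ℓ - δ°_j) for j ≠ ℓ and H̃_{j,j} = B_{j,j} + Σ_{k≠j} B_{j,k} cos(δ°_k - δ°_j) E°_k/E°_j - 1/(χ_j E°_j), where B_{j,ℓ} ≥ 0 for j ≠ ℓ, B_{j,j} = b̂_j + Σ_{k≠j} B_{j,k} with b̂_j ≥ 0, χ_j > 0, E°_j > 0. If for all j, 1/χ_j > Σ_{ℓ} B_{j,ℓ}(E°_j + E°_ℓ) (with the convention B_{j,j} E°_j + Σ_{ℓ≠j} terms interpreted via the diagonal), then every eigenvalue of H̃ is negative, i.e., H̃ is negative definite. -/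
open Matrix

/-- Voltage stability (Corollary 1): if `1/χⱼ > ∑ₗ B_{jℓ}(E°ⱼ + E°ₗ)` for all `j`,
then the voltage-subsystem matrix `H̃` is negative definite. -/
theorem stmt6 {N : ℕ} (B : Matrix (Fin N) (Fin N) ℝ) (δ E χ bhat : Fin N → ℝ)
    (hBsymm : B.IsSymm)
    (hBoff : ∀ j ℓ, j ≠ ℓ → 0 ≤ B j ℓ)
    (hBdiag : ∀ j, B j j = bhat j + ∑ k ∈ Finset.univ.erase j, B j k)
    (hbhat : ∀ j, 0 ≤ bhat j)
    (hχ : ∀ j, 0 < χ j) (hE : ∀ j, 0 < E j)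
    (Ht : Matrix (Fin N) (Fin N) ℝ)
    (hHoff : ∀ j ℓ, j ≠ ℓ → Ht j ℓ = B j ℓ * Real.cos (δ ℓ - δ j))
    (hHdiag : ∀ j, Ht j j = B j j +
      (∑ k ∈ Finset.univ.erase j, B j k * Real.cos (δ k - δ j) * E k / E j) -
      1 / (χ j * E j))
    (hdroop : ∀ j, 1 / χ j > ∑ ℓ, B j ℓ * (E j + E ℓ)) :
    ∀ x : Fin N → ℝ, x ≠ 0 → x ⬝ᵥ (Ht *ᵥ x) < 0 := by
  intro x hx
  set S : Fin N → ℝ := fun j => ∑ ℓ ∈ Finset.univ.erase j, B j ℓ with hS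
  have hBoffnn : ∀ j ℓ, ℓ ∈ Finset.univ.erase j → 0 ≤ B j ℓ := by
    intro j ℓ hℓ
    exact hBoff j ℓ (Finset.ne_of_mem_erase hℓ).symm
  have hSnn : ∀ j, 0 ≤ S j := fun j => Finset.sum_nonneg (hBoffnn j)
  have hBjj : ∀ j, 0 ≤ B j j := by
    intro j
    rw [hBdiag j]
    exact add_nonneg (hbhat j) (hSnn j)
  -- key diagonal dominance estimate
  have hkey : ∀ j, Ht j j + S j < 0 := by
    intro j
    have hEj := hE j
    have hχj := hχ j
    rw [hHdiag j]
    have hlt : (B j j + (∑ k ∈ Finset.univ.erase j,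
        B j k * Real.cos (δ k - δ j) * E k / E j) + S j) * E j < 1 / χ j := by
      have hexp : (B j j + (∑ k ∈ Finset.univ.erase j,
          B j k * Real.cos (δ k - δ j) * E k / E j) + S j) * E j
          = B j j * E j + (∑ k ∈ Finset.univ.erase j,
            B j k * Real.cos (δ k - δ j) * E k) + S j * E j := by
        rw [add_mul, add_mul, Finset.sum_mul]
        congr 1
        congr 1
        apply Finset.sum_congr rfl
        intro k _
        field_simp
      rw [hexp]
      have hsum : ∑ ℓ, B j ℓ * (E j + E ℓ)
          = 2 * B j j * E j + S j * E j + ∑ ℓ ∈ Finset.univ.erase j, B j ℓ * E ℓ := by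
        rw [← Finset.add_sum_erase _ _ (Finset.mem_univ j)]
        have : ∑ ℓ ∈ Finset.univ.erase j, B j ℓ * (E j + E ℓ)
            = S j * E j + ∑ ℓ ∈ Finset.univ.erase j, B j ℓ * E ℓ := by
          rw [hS, Finset.sum_mul, ← Finset.sum_add_distrib]
          apply Finset.sum_congr rfl
          intro ℓ _
          ring
        rw [this]; ring
      have hcos : ∑ k ∈ Finset.univ.erase j, B j k * Real.cos (δ k - δ j) * E k
          ≤ ∑ k ∈ Finset.univ.erase j, B j k * E k := by
        apply Finset.sum_le_sum
        intro k hk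
        have hBk := hBoffnn j k hk
        have : B j k * Real.cos (δ k - δ j) ≤ B j k :=
          mul_le_of_le_one_right hBk (Real.cos_le_one _)
        exact mul_le_mul_of_nonneg_right this (hE k).le
      have hd := hdroop j
      rw [hsum] at hd
      have hBjjE : 0 ≤ B j j * E j := mul_nonneg (hBjj j) hEj.le
      linarith
    have h2 : B j j + (∑ k ∈ Finset.univ.erase j,
        B j k * Real.cos (δ k - δ j) * E k / E j) + S j < 1 / (χ j * E j) := by
      rw [← div_div, lt_div_iff₀ hEj]
      exact hlt
    linarith
  -- main quadratic form estimate
  have hmain : x ⬝ᵥ (Ht *ᵥ x) ≤ ∑ j, (Ht j j + S j) * x j ^ 2 := by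
    have h1 : x ⬝ᵥ (Ht *ᵥ x) = ∑ j, ∑ ℓ, x j * Ht j ℓ * x ℓ := by
      simp [dotProduct, mulVec, Finset.mul_sum, mul_assoc]
    rw [h1]
    have h2 : ∀ j, ∑ ℓ, x j * Ht j ℓ * x ℓ
        ≤ Ht j j * x j ^ 2 + ∑ ℓ ∈ Finset.univ.erase j, B j ℓ * (x j ^ 2 + x ℓ ^ 2) / 2 := by
      intro j
      rw [← Finset.add_sum_erase _ (fun ℓ => x j * Ht j ℓ * x ℓ) (Finset.mem_univ j)]
      apply add_le_add
      · nlinarith [sq_nonneg (x j)]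
      · apply Finset.sum_le_sum
        intro ℓ hℓ
        have hne : j ≠ ℓ := (Finset.ne_of_mem_erase hℓ).symm
        rw [hHoff j ℓ hne]
        have hB := hBoff j ℓ hne
        have hcos1 : Real.cos (δ ℓ - δ j) ≤ 1 := Real.cos_le_one _
        have hcos2 : -1 ≤ Real.cos (δ ℓ - δ j) := Real.neg_one_le_cos _
        nlinarith [sq_nonneg (x j + x ℓ), sq_nonneg (x j - x ℓ),
          mul_nonneg hB (sq_nonneg (x j + x ℓ)), mul_nonneg hB (sq_nonneg (x j - x ℓ))]
    calc ∑ j, ∑ ℓ, x j * Ht j ℓ * x ℓ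
        ≤ ∑ j, (Ht j j * x j ^ 2 + ∑ ℓ ∈ Finset.univ.erase j, B j ℓ * (x j ^ 2 + x ℓ ^ 2) / 2) :=
          Finset.sum_le_sum fun j _ => h2 j
      _ = ∑ j, (Ht j j + S j) * x j ^ 2 := by
          have hswap : ∑ j, ∑ ℓ ∈ Finset.univ.erase j, B j ℓ * x ℓ ^ 2
              = ∑ j, ∑ ℓ ∈ Finset.univ.erase j, B j ℓ * x j ^ 2 := by
            rw [Finset.sum_comm' (t' := Finset.univ) (s' := fun ℓ => Finset.univ.erase ℓ)]
            · apply Finset.sum_congr rfl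
              intro ℓ _
              apply Finset.sum_congr rfl
              intro j _
              rw [hBsymm.apply]
            · intro a b
              simp only [Finset.mem_univ, Finset.mem_erase, and_true, true_and]
              exact ne_comm
          have hSx : ∀ j, ∑ ℓ ∈ Finset.univ.erase j, B j ℓ * x j ^ 2 = S j * x j ^ 2 := by
            intro j
            simp only [hS]
            rw [Finset.sum_mul]
          have expand : ∀ j, ∑ ℓ ∈ Finset.univ.erase j, B j ℓ * (x j ^ 2 + x ℓ ^ 2) / 2
              = (∑ ℓ ∈ Finset.univ.erase j, B j ℓ * x j ^ 2) / 2
                + (∑ ℓ ∈ Finset.univ.erase j, B j ℓ * x ℓ ^ 2) / 2 := by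
            intro j
            rw [Finset.sum_div, Finset.sum_div, ← Finset.sum_add_distrib]
            apply Finset.sum_congr rfl
            intro ℓ _
            ring
          calc ∑ j, (Ht j j * x j ^ 2 + ∑ ℓ ∈ Finset.univ.erase j, B j ℓ * (x j ^ 2 + x ℓ ^ 2) / 2)
              = ∑ j, (Ht j j * x j ^ 2 + S j * x j ^ 2 / 2)
                + (∑ j, ∑ ℓ ∈ Finset.univ.erase j, B j ℓ * x ℓ ^ 2) / 2 := by
                rw [Finset.sum_div, ← Finset.sum_add_distrib]
                apply Finset.sum_congr rfl
                intro j _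
                rw [expand j, hSx j]
                ring
            _ = ∑ j, (Ht j j * x j ^ 2 + S j * x j ^ 2 / 2) + ∑ j, S j * x j ^ 2 / 2 := by
                rw [hswap, Finset.sum_div]
                congr 1
                apply Finset.sum_congr rfl
                intro j _
                rw [hSx j]
            _ = ∑ j, (Ht j j + S j) * x j ^ 2 := by
                rw [← Finset.sum_add_distrib]
                apply Finset.sum_congr rfl
                intro j _
                ring
    -- fallthrough
  obtain ⟨j0, hj0⟩ : ∃ j, x j ≠ 0 := Function.ne_iff.mp hx
  have hfin : ∑ j, (Ht j j + S j) * x j ^ 2 < 0 := by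
    have := Finset.sum_lt_sum (s := Finset.univ)
      (f := fun j => (Ht j j + S j) * x j ^ 2) (g := fun _ => (0 : ℝ))
      (fun i _ => mul_nonpos_of_nonpos_of_nonneg (hkey i).le (sq_nonneg _))
      ⟨j0, Finset.mem_univ j0, mul_neg_of_neg_of_pos (hkey j0) (lt_of_le_of_ne (sq_nonneg _) (Ne.symm (pow_ne_zero 2 hj0)))⟩
    simpa using this
  linarith
end

section
/- Lyapunov decrease for droop-controlled inverters: let T, K, X, E be diagonal positive definite N×N matrices, Λ, H̃ symmetric, A arbitrary N×N, and define the quadratic function V(ν, ξ, ε) = νᵀK⁻¹Tν + ξᵀΛξ - 2ξᵀAᵀε - εᵀH̃ε. Along the linear dynamics ξ̇ = ν, Tν̇ = -ν - K(Λξ - Aᵀε), Tε̇ = XE(Aξ + H̃ε), one has dV/dt = -2νᵀK⁻¹ν - 2(Aξ + H̃ε)ᵀ T⁻¹XE (Aξ + H̃ε) ≤ 0. -/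
/-!
Write `u = Λξ - Aᵀε` and `w = Aξ + H̃ε`. By the product rule, and since `K⁻¹T`, `Λ` and `H̃`
are symmetric, `dV/dt = 2 νᵀ(K⁻¹T ν̇ + u) - 2 wᵀε̇`. The first dynamics equation gives
`K⁻¹T ν̇ = -K⁻¹ν - u`, and the second gives `ε̇ = T⁻¹XE w`, which yields the stated formula.
Both remaining quadratic forms have positive diagonal matrices, hence are nonnegative.
-/

open Matrix

section Derivatives

variable {𝕜 : Type*} [NontriviallyNormedField 𝕜] {m n : Type*} [Fintype n]
  {f g : 𝕜 → n → 𝕜} {f' g' : n → 𝕜} {t : 𝕜}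

theorem HasDerivAt.dotProduct (hf : HasDerivAt f f' t) (hg : HasDerivAt g g' t) :
    HasDerivAt (fun s => f s ⬝ᵥ g s) (f' ⬝ᵥ g t + f t ⬝ᵥ g') t := by
  simp only [_root_.dotProduct, ← Finset.sum_add_distrib]
  exact HasDerivAt.fun_sum fun i _ => (hasDerivAt_pi.1 hf i).mul (hasDerivAt_pi.1 hg i)

theorem HasDerivAt.mulVec (M : Matrix m n 𝕜) (hf : HasDerivAt f f' t) :
    HasDerivAt (fun s => M *ᵥ f s) (M *ᵥ f') t :=
  hasDerivAt_pi.2 fun i => by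
    simpa only [Matrix.mulVec, _root_.dotProduct] using
      HasDerivAt.fun_sum fun j _ => (hasDerivAt_pi.1 hf j).const_mul (M i j)

theorem Matrix.IsSymm.dotProduct_mulVec_comm {R : Type*} [CommSemiring R] {M : Matrix n n R}
    (hM : M.IsSymm) (v w : n → R) : v ⬝ᵥ (M *ᵥ w) = w ⬝ᵥ (M *ᵥ v) := by
  rw [dotProduct_mulVec, ← hM, vecMul_transpose, dotProduct_comm, hM]

theorem Matrix.IsSymm.hasDerivAt_dotProduct_mulVec_self {M : Matrix n n 𝕜} (hM : M.IsSymm)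
    (hf : HasDerivAt f f' t) :
    HasDerivAt (fun s => f s ⬝ᵥ (M *ᵥ f s)) (2 * (f t ⬝ᵥ (M *ᵥ f'))) t :=
  (hf.dotProduct (hf.mulVec M)).congr_deriv <| by
    rw [hM.dotProduct_mulVec_comm f', two_mul]

end Derivatives

section LinearAlgebra

variable {n : Type*} [Fintype n] [DecidableEq n]

theorem Matrix.inv_diagonal_of_ne_zero {K : Type*} [Field K] {d : n → K} (hd : ∀ i, d i ≠ 0) :
    (diagonal d)⁻¹ = diagonal d⁻¹ :=
  inv_eq_right_inv <| by
    rw [diagonal_mul_diagonal, ← diagonal_one]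
    exact congrArg diagonal (funext fun i => mul_inv_cancel₀ (hd i))

theorem Matrix.isUnit_det_diagonal_of_ne_zero {K : Type*} [Field K] {d : n → K}
    (hd : ∀ i, d i ≠ 0) : IsUnit (diagonal d).det := by
  rw [det_diagonal, isUnit_iff_ne_zero]
  exact Finset.prod_ne_zero_iff.2 fun i _ => hd i

theorem dotProduct_diagonal_mulVec_self_nonneg {R : Type*} [CommRing R] [LinearOrder R]
    [IsStrictOrderedRing R] {d : n → R} (hd : ∀ i, 0 ≤ d i) (x : n → R) :
    0 ≤ x ⬝ᵥ (diagonal d *ᵥ x) := by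
  simp only [dotProduct, mulVec_diagonal]
  exact Finset.sum_nonneg fun i _ => by
    rw [mul_left_comm]
    exact mul_nonneg (hd i) (mul_self_nonneg (x i))

theorem droop_lyapunov_deriv_eq {R : Type*} [CommRing R] {Λ A Ht K T D : Matrix n n R}
    (hΛ : Λ.IsSymm) (hHt : Ht.IsSymm) (hK : IsUnit K.det) (hT : IsUnit T.det)
    {ξ ν ε ν' ε' : n → R} (hν' : T *ᵥ ν' = -ν - K *ᵥ (Λ *ᵥ ξ - Aᵀ *ᵥ ε))
    (hε' : T *ᵥ ε' = D *ᵥ (A *ᵥ ξ + Ht *ᵥ ε)) :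
    2 * (ν ⬝ᵥ ((K⁻¹ * T) *ᵥ ν')) + 2 * (ξ ⬝ᵥ (Λ *ᵥ ν)) -
        2 * (ν ⬝ᵥ (Aᵀ *ᵥ ε) + ξ ⬝ᵥ (Aᵀ *ᵥ ε')) - 2 * (ε ⬝ᵥ (Ht *ᵥ ε')) =
      -2 * (ν ⬝ᵥ (K⁻¹ *ᵥ ν)) -
        2 * ((A *ᵥ ξ + Ht *ᵥ ε) ⬝ᵥ ((T⁻¹ * D) *ᵥ (A *ᵥ ξ + Ht *ᵥ ε))) := by
  have hν'_eq : (K⁻¹ * T) *ᵥ ν' = -(K⁻¹ *ᵥ ν) - (Λ *ᵥ ξ - Aᵀ *ᵥ ε) := by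
    rw [← mulVec_mulVec, hν', mulVec_sub, mulVec_neg, mulVec_mulVec, nonsing_inv_mul _ hK,
      one_mulVec]
  have hε'_eq : ε' = (T⁻¹ * D) *ᵥ (A *ᵥ ξ + Ht *ᵥ ε) := by
    rw [← mulVec_mulVec, ← hε', mulVec_mulVec, nonsing_inv_mul _ hT, one_mulVec]
  have hAε' : ξ ⬝ᵥ (Aᵀ *ᵥ ε') = (A *ᵥ ξ) ⬝ᵥ ε' := by
    rw [dotProduct_mulVec, vecMul_transpose]
  have hHtε' : ε ⬝ᵥ (Ht *ᵥ ε') = (Ht *ᵥ ε) ⬝ᵥ ε' := by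
    rw [hHt.dotProduct_mulVec_comm, dotProduct_comm]
  rw [hν'_eq, hΛ.dotProduct_mulVec_comm ξ, hAε', hHtε', ← hε'_eq, add_dotProduct,
    dotProduct_sub, dotProduct_sub, dotProduct_neg]
  ring

end LinearAlgebra

/-- Lyapunov decrease for the linearized droop-controlled inverter dynamics:
along the trajectories, `dV/dt = -2νᵀK⁻¹ν - 2(Aξ + H̃ε)ᵀT⁻¹XE(Aξ + H̃ε) ≤ 0`. -/
theorem stmt17 {N : ℕ} (Λ A Ht : Matrix (Fin N) (Fin N) ℝ)
    (τ κ χ E : Fin N → ℝ)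
    (hτ : ∀ j, 0 < τ j) (hκ : ∀ j, 0 < κ j) (hχ : ∀ j, 0 < χ j)
    (hE : ∀ j, 0 < E j)
    (hΛsymm : Λ.IsSymm) (hHtsymm : Ht.IsSymm)
    (ξ ν ε : ℝ → Fin N → ℝ)
    (hξ : ∀ t, HasDerivAt ξ (ν t) t)
    (hν : ∀ t, HasDerivAt ν
      ((Matrix.diagonal τ)⁻¹ *ᵥ
        (-(ν t) - Matrix.diagonal κ *ᵥ (Λ *ᵥ ξ t - Aᵀ *ᵥ ε t))) t)
    (hε : ∀ t, HasDerivAt ε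
      ((Matrix.diagonal τ)⁻¹ *ᵥ
        ((Matrix.diagonal χ * Matrix.diagonal E) *ᵥ (A *ᵥ ξ t + Ht *ᵥ ε t))) t)
    (V : ℝ → ℝ)
    (hV : V = fun t =>
      ν t ⬝ᵥ (((Matrix.diagonal κ)⁻¹ * Matrix.diagonal τ) *ᵥ ν t) +
      ξ t ⬝ᵥ (Λ *ᵥ ξ t) - 2 * (ξ t ⬝ᵥ (Aᵀ *ᵥ ε t)) - ε t ⬝ᵥ (Ht *ᵥ ε t)) :
    ∀ t : ℝ,
      HasDerivAt V
        (-2 * (ν t ⬝ᵥ ((Matrix.diagonal κ)⁻¹ *ᵥ ν t)) -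
          2 * ((A *ᵥ ξ t + Ht *ᵥ ε t) ⬝ᵥ
            (((Matrix.diagonal τ)⁻¹ * Matrix.diagonal χ * Matrix.diagonal E) *ᵥ
              (A *ᵥ ξ t + Ht *ᵥ ε t)))) t ∧
      (-2 * (ν t ⬝ᵥ ((Matrix.diagonal κ)⁻¹ *ᵥ ν t)) -
          2 * ((A *ᵥ ξ t + Ht *ᵥ ε t) ⬝ᵥ
            (((Matrix.diagonal τ)⁻¹ * Matrix.diagonal χ * Matrix.diagonal E) *ᵥ
              (A *ᵥ ξ t + Ht *ᵥ ε t)))) ≤ 0 := by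
  intro t
  have hτ0 : ∀ j, τ j ≠ 0 := fun j => (hτ j).ne'
  have hκ0 : ∀ j, κ j ≠ 0 := fun j => (hκ j).ne'
  have hT := isUnit_det_diagonal_of_ne_zero hτ0
  have hK := isUnit_det_diagonal_of_ne_zero hκ0
  have hKT : ((diagonal κ)⁻¹ * diagonal τ).IsSymm := by
    rw [inv_diagonal_of_ne_zero hκ0, diagonal_mul_diagonal]
    exact isSymm_diagonal _
  have hV' := (((hKT.hasDerivAt_dotProduct_mulVec_self (hν t)).add
    (hΛsymm.hasDerivAt_dotProduct_mulVec_self (hξ t))).sub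
    (((hξ t).dotProduct ((hε t).mulVec Aᵀ)).const_mul 2)).sub
    (hHtsymm.hasDerivAt_dotProduct_mulVec_self (hε t))
  refine ⟨hV ▸ hV'.congr_deriv ?_, ?_⟩
  · rw [Matrix.mul_assoc]
    exact droop_lyapunov_deriv_eq hΛsymm hHtsymm hK hT
      (by rw [mulVec_mulVec, mul_nonsing_inv _ hT, one_mulVec])
      (by rw [mulVec_mulVec, mul_nonsing_inv _ hT, one_mulVec])
  · have hνν := dotProduct_diagonal_mulVec_self_nonneg (d := κ⁻¹)
      (fun j => (inv_pos.2 (hκ j)).le) (ν t)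
    have hww := dotProduct_diagonal_mulVec_self_nonneg (d := fun j => τ⁻¹ j * χ j * E j)
      (fun j => (mul_pos (mul_pos (inv_pos.2 (hτ j)) (hχ j)) (hE j)).le) (A *ᵥ ξ t + Ht *ᵥ ε t)
    rw [inv_diagonal_of_ne_zero hκ0, inv_diagonal_of_ne_zero hτ0, diagonal_mul_diagonal,
      diagonal_mul_diagonal]
    linarith
end
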